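/- Let X be a path-connected normal topological space and n a natural number. Then cat X ≤ n if and only if for every m > n, X admits a family of m open X-contractible sets that is an (n+1)-cover of X (every n+1 members of the family cover X). -/

import Mathlib

/-!
Take a partition of unity `fᵢ` subordinate to a cover `U₀, …, Uₙ` by open `X`-contractible sets
and, for each `j < m`, weights `e (j, i)` such that all `(n + 1) m` of them are linearly independent
over `ℚ`. Let `Wⱼ` be the set of points where one of the `fᵢ x * exp (e (j, i))` strictly exceeds
the others. It is a disjoint union of open sets, the `i`-th one inside `Uᵢ`, so it is
`X`-contractible because `X` is path-connected. A point outside `n + 1` of the `Wⱼ` gives `n + 1`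
ties `log (f a x) + e (j, a) = log (f c x) + e (j, c)` with `a ≠ c`. The vectors `δ_a - δ_c` lie in
the `n`-dimensional space of sum-zero vectors of `ℚⁿ⁺¹`, so some rational combination of them
vanishes, and the same combination of the ties is a rational relation between the `e (j, i)`.
-/

open Set

/-- A subset `U` of a topological space `X` is `X`-contractible if the inclusion
`U ↪ X` is nullhomotopic (i.e. `U` can be contracted to a point within `X`). -/
def ContractibleIn {X : Type*} [TopologicalSpace X] (U : Set X) : Prop :=
  ContinuousMap.Nullhomotopic (⟨fun x => (x : X), continuous_subtype_val⟩ : C(U, X))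

/-- `cat X ≤ n` : the Lusternik–Schnirelmann category of `X` is at most `n`, i.e.
`X` admits an open cover by `n + 1` `X`-contractible sets. -/
def CatLE (X : Type*) [TopologicalSpace X] (n : ℕ) : Prop :=
  ∃ U : Fin (n + 1) → Set X,
    (∀ i, IsOpen (U i)) ∧ (∀ i, ContractibleIn (U i)) ∧ (⋃ i, U i) = univ

open Function

theorem not_linearIndependent_of_sum_eq_zero {K ι J : Type*} [Field K] [Fintype ι] [Nonempty ι]
    [Fintype J] (hJ : Fintype.card ι ≤ Fintype.card J) {v : J → ι → K}
    (hv : ∀ j, ∑ i, v j i = 0) : ¬ LinearIndependent K v := by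
  classical
  intro hli
  let S := LinearMap.ker (Fintype.linearCombination K (1 : ι → K))
  have hvS : ∀ j, v j ∈ S := by simpa [S, Fintype.linearCombination_apply] using hv
  have hS : S ≠ ⊤ := by
    obtain ⟨i⟩ := ‹Nonempty ι›
    intro h
    have : Pi.single i (1 : K) ∈ S := h ▸ Submodule.mem_top
    simp [S, Fintype.linearCombination_apply_single] at this
  have hcard : Fintype.card J ≤ Module.finrank K S :=
    (LinearIndependent.of_comp S.subtype (v := fun j => ⟨v j, hvS j⟩)
      (by exact hli)).fintype_card_le_finrank
  have := Submodule.finrank_lt hS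
  rw [Module.finrank_fintype_fun_eq_card] at this
  omega

theorem LinearIndependent.not_forall_add_eq_add {ι J : Type*} [Fintype ι] [Nonempty ι] [Fintype J]
    (hJ : Fintype.card ι ≤ Fintype.card J) {e : J → ι → ℝ}
    (he : LinearIndependent ℚ fun p : J × ι => e p.1 p.2) (u : ι → ℝ) {a c : J → ι}
    (hac : ∀ j, a j ≠ c j) : ¬ ∀ j, u (a j) + e j (a j) = u (c j) + e j (c j) := by
  classical
  intro htie
  let v : J → ι → ℚ := fun j => Pi.single (a j) 1 - Pi.single (c j) 1
  have hv : ∀ j, ∑ i, v j i = 0 := fun j => by simp [v, Finset.sum_sub_distrib]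
  have hdep := not_linearIndependent_of_sum_eq_zero hJ hv
  rw [Fintype.not_linearIndependent_iff] at hdep
  obtain ⟨g, hg, j₀, hj₀⟩ := hdep
  have hv_apply : ∀ (x : ι → ℝ) j, Fintype.linearCombination ℚ x (v j) = x (a j) - x (c j) := by
    intro x j
    simp [v, Fintype.linearCombination_apply_single]
  have hrel : ∑ p : J × ι, (g p.1 * v p.1 p.2) • e p.1 p.2 = 0 :=
    calc ∑ p : J × ι, (g p.1 * v p.1 p.2) • e p.1 p.2
        = ∑ j, g j • Fintype.linearCombination ℚ (e j) (v j) := by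
          simp [Fintype.sum_prod_type, mul_smul, Finset.smul_sum, Fintype.linearCombination_apply]
      _ = -Fintype.linearCombination ℚ u (∑ j, g j • v j) := by
          simp only [hv_apply, map_sum, map_smul, ← Finset.sum_neg_distrib, ← smul_neg]
          congr! 2 with j
          linarith [htie j]
      _ = 0 := by rw [hg, map_zero, neg_zero]
  have hg₀ := Fintype.linearIndependent_iff.mp he _ hrel (j₀, a j₀)
  simp [v, hac j₀] at hg₀
  exact hj₀ hg₀

theorem Real.exists_linearIndependent_rat (κ : Type*) [Finite κ] :
    ∃ e : κ → ℝ, LinearIndependent ℚ e := by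
  have := Fintype.ofFinite κ
  obtain ⟨f, hf⟩ := exists_linearIndependent_of_le_rank (R := ℚ) (M := ℝ)
    (n := Fintype.card κ) (Real.rank_rat_real ▸ (Cardinal.nat_lt_continuum _).le)
  exact ⟨f ∘ Fintype.equivFin κ, hf.comp _ (Fintype.equivFin κ).injective⟩

section ContractibleIn

variable {X : Type*} [TopologicalSpace X]

theorem ContractibleIn.mono {U V : Set X} (h : ContractibleIn U) (hVU : V ⊆ U) :
    ContractibleIn V :=
  h.comp_left ⟨inclusion hVU, continuous_inclusion hVU⟩

theorem ContractibleIn.homotopic_const [PathConnectedSpace X] {U : Set X} (h : ContractibleIn U)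
    (x : X) : (⟨fun y => (y : X), continuous_subtype_val⟩ : C(U, X)).Homotopic
      (ContinuousMap.const U x) :=
  let ⟨y, hy⟩ := h
  hy.trans ⟨(PathConnectedSpace.somePath y x).toHomotopyConst⟩

/-- The contractions of the pieces, all ending at a common point, glue along the disjoint open
cover. -/
theorem contractibleIn_iUnion_of_pairwise_disjoint [PathConnectedSpace X] {ι : Type*}
    {P : ι → Set X} (hP : ∀ i, IsOpen (P i)) (hd : Pairwise (Disjoint on P))
    (hc : ∀ i, ContractibleIn (P i)) : ContractibleIn (⋃ i, P i) := by
  obtain ⟨x⟩ := PathConnectedSpace.nonempty (X := X)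
  have H i := Classical.choice ((hc i).homotopic_const x)
  let S i : Set (unitInterval × ↥(⋃ i, P i)) := {q | (q.2 : X) ∈ P i}
  let φ i : C(S i, X) :=
    (H i).toContinuousMap.comp ⟨fun q => (q.1.1, ⟨q.1.2, q.2⟩), by fun_prop⟩
  have hφ i j q (hi : q ∈ S i) (hj : q ∈ S j) : φ i ⟨q, hi⟩ = φ j ⟨q, hj⟩ := by
    obtain rfl : i = j := of_not_not fun hij => disjoint_left.mp (hd hij) hi hj
    rfl
  have hS q : ∃ i, S i ∈ nhds q := by
    obtain ⟨i, hi⟩ := mem_iUnion.mp q.2.2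
    exact ⟨i, ((hP i).preimage (by fun_prop)).mem_nhds hi⟩
  have hlift t (z : ↥(⋃ i, P i)) : ∃ i, ∃ hz : (z : X) ∈ P i,
      ContinuousMap.liftCover S φ hφ hS (t, z) = H i (t, ⟨z, hz⟩) := by
    obtain ⟨i, hi⟩ := mem_iUnion.mp z.2
    exact ⟨i, hi, ContinuousMap.liftCover_coe (i := i) ⟨(t, z), hi⟩⟩
  refine ⟨x, ⟨⟨ContinuousMap.liftCover S φ hφ hS, fun z => ?_, fun z => ?_⟩⟩⟩
  · obtain ⟨i, hz, h⟩ := hlift 0 z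
    exact h.trans ((H i).apply_zero _)
  · obtain ⟨i, hz, h⟩ := hlift 1 z
    exact h.trans ((H i).apply_one _)

end ContractibleIn

section StrictArgmax

variable {X ι : Type*}

def strictArgmaxSet (w : ι → X → ℝ) (i : ι) : Set X := {x | ∀ k ≠ i, w k x < w i x}

theorem isOpen_strictArgmaxSet [TopologicalSpace X] [Finite ι] {w : ι → X → ℝ}
    (hw : ∀ i, Continuous (w i)) (i : ι) : IsOpen (strictArgmaxSet w i) := by
  simp only [strictArgmaxSet, ofPred_forall]
  exact isOpen_iInter_of_finite fun k => isOpen_iInter_of_finite fun _ => isOpen_lt (hw k) (hw i)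

theorem pairwise_disjoint_strictArgmaxSet (w : ι → X → ℝ) :
    Pairwise (Disjoint on strictArgmaxSet w) :=
  fun i k hik => disjoint_left.mpr fun _ hi hk => (hi k hik.symm).not_gt (hk i hik)

theorem pos_of_mem_strictArgmaxSet {w : ι → X → ℝ} {i : ι} {x : X}
    (hx : x ∈ strictArgmaxSet w i) (hpos : ∃ k, 0 < w k x) : 0 < w i x := by
  obtain ⟨k, hk⟩ := hpos
  rcases eq_or_ne k i with rfl | hki
  · exact hk
  · exact hk.trans (hx k hki)

theorem exists_ne_eq_of_notMem_iUnion_strictArgmaxSet [Finite ι] [Nonempty ι] {w : ι → X → ℝ}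
    {x : X} (hx : x ∉ ⋃ i, strictArgmaxSet w i) :
    ∃ a c, a ≠ c ∧ w a x = w c x ∧ ∀ k, w k x ≤ w a x := by
  obtain ⟨a, ha⟩ := Finite.exists_max fun k => w k x
  have : ¬ ∀ k ≠ a, w k x < w a x := fun h => hx (mem_iUnion.mpr ⟨a, h⟩)
  push Not at this
  obtain ⟨c, hca, hc⟩ := this
  exact ⟨a, c, hca.symm, le_antisymm hc (ha c), ha⟩

end StrictArgmax

theorem biUnion_iUnion_strictArgmaxSet_mul_exp_eq_univ {X ι J : Type*} [Fintype ι] [Nonempty ι]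
    {f : ι → X → ℝ} (hf : ∀ x, ∃ i, 0 < f i x) {e : J → ι → ℝ}
    (he : LinearIndependent ℚ fun p : J × ι => e p.1 p.2) {s : Finset J}
    (hs : Fintype.card ι ≤ s.card) :
    ⋃ j ∈ s, ⋃ i, strictArgmaxSet (fun i x => f i x * Real.exp (e j i)) i = univ := by
  refine eq_univ_of_forall fun x => ?_
  by_contra hx
  simp only [mem_iUnion, not_exists] at hx
  have htie (j : s) : ∃ a c, a ≠ c ∧
      Real.log (f a x) + e j a = Real.log (f c x) + e j c := by
    obtain ⟨a, c, hac, heq, hmax⟩ := exists_ne_eq_of_notMem_iUnion_strictArgmaxSet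
      (w := fun i x => f i x * Real.exp (e j i)) (x := x) (by simpa using hx j j.2)
    obtain ⟨k, hk⟩ := hf x
    have ha : f a x * Real.exp (e j a) ≠ 0 :=
      ((mul_pos hk (Real.exp_pos _)).trans_le (hmax k)).ne'
    have hc : f c x * Real.exp (e j c) ≠ 0 := heq ▸ ha
    refine ⟨a, c, hac, ?_⟩
    have hlog := congrArg Real.log heq
    rwa [Real.log_mul (left_ne_zero_of_mul ha) (Real.exp_pos _).ne',
      Real.log_mul (left_ne_zero_of_mul hc) (Real.exp_pos _).ne', Real.log_exp,
      Real.log_exp] at hlog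
  choose a c hac htie using htie
  exact LinearIndependent.not_forall_add_eq_add (by simpa using hs) (e := fun j i => e j.1 i)
    (he.comp _ (Subtype.val_injective.prodMap injective_id)) (fun i => Real.log (f i x)) hac htie

theorem CatLE.exists_nSuccCover {X : Type*} [TopologicalSpace X] [NormalSpace X]
    [PathConnectedSpace X] {n : ℕ} (h : CatLE X n) (m : ℕ) :
    ∃ W : Fin m → Set X, (∀ j, IsOpen (W j)) ∧ (∀ j, ContractibleIn (W j)) ∧
      ∀ s : Finset (Fin m), s.card = n + 1 → ⋃ j ∈ s, W j = univ := by
  obtain ⟨U, hUo, hUc, hUcov⟩ := h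
  obtain ⟨f, hfU⟩ := PartitionOfUnity.exists_isSubordinate_of_locallyFinite isClosed_univ U hUo
    (locallyFinite_of_finite U) hUcov.ge
  have hf x : ∃ i, 0 < f i x := f.exists_pos (mem_univ x)
  obtain ⟨e, he⟩ := Real.exists_linearIndependent_rat (Fin m × Fin (n + 1))
  let w (j : Fin m) (i : Fin (n + 1)) (x : X) : ℝ := f i x * Real.exp (e (j, i))
  have hw j i : Continuous (w j i) := by fun_prop
  have hsub j i : strictArgmaxSet (w j) i ⊆ U i := fun x hx =>
    hfU i <| subset_tsupport _ <| left_ne_zero_of_mul (pos_of_mem_strictArgmaxSet hx <|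
      (hf x).imp fun i hi => mul_pos hi (Real.exp_pos _)).ne'
  refine ⟨fun j => ⋃ i, strictArgmaxSet (w j) i,
    fun j => isOpen_iUnion (isOpen_strictArgmaxSet (hw j)),
    fun j => contractibleIn_iUnion_of_pairwise_disjoint (isOpen_strictArgmaxSet (hw j))
      (pairwise_disjoint_strictArgmaxSet _) fun i => (hUc i).mono (hsub j i),
    fun s hs => biUnion_iUnion_strictArgmaxSet_mul_exp_eq_univ hf he (by simp [hs])⟩

/-- Ostrand-type characterization of the LS-category: for a path-connected normal
space `X`, `cat X ≤ n` iff for every `m > n` there is a family of `m` open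
`X`-contractible sets every `n + 1` of which cover `X`. -/
theorem catLE_iff_forall_exists_nSuccCover
    (X : Type*) [TopologicalSpace X] [NormalSpace X] [PathConnectedSpace X] (n : ℕ) :
    CatLE X n ↔
      ∀ m : ℕ, n < m →
        ∃ U : Fin m → Set X,
          (∀ i, IsOpen (U i)) ∧
          (∀ i, ContractibleIn (U i)) ∧
          (∀ s : Finset (Fin m), s.card = n + 1 → ⋃ i ∈ s, U i = univ) := by
  refine ⟨fun h m _ => h.exists_nSuccCover m, fun h => ?_⟩
  obtain ⟨U, hUo, hUc, hUcov⟩ := h (n + 1) n.lt_succ_self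
  exact ⟨U, hUo, hUc, by simpa using hUcov Finset.univ (by simp)⟩
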